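/- arXiv:2202.12766 — 3 statements merged into one kernel-verified Lean document; each statement's English description precedes it below -/
import Mathlib

section
/- Let k be a commutative ring, H a bialgebra over k, and A a unital associative k-algebra. Let V be an invertible element of A ⊗ H satisfying (id_A ⊗ Δ)(V) = V₁₂V₁₃ in A ⊗ H ⊗ H. Let θ : H → k be a k-linear functional with θ(1_H) = 1 which is invariant in the sense that (id_H ⊗ θ)(Δ(h)) = θ(h)·1_H for all h ∈ H. Define E : A → A by E(T) = (id_A ⊗ θ)(V (T ⊗ 1_H) V⁻¹), and let A^V := {T ∈ A : V(T ⊗ 1_H) = (T ⊗ 1_H)V} be the fixed-point subalgebra. Then: (i) E(T) ∈ A^V for every T ∈ A; (ii) E(T) = T for every T ∈ A^V; (iii) E(aTb) = a·E(T)·b for all T ∈ A and all a, b ∈ A^V. In particular E is a unital idempotent A^V-bimodule projection of A onto A^V. -/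
open TensorProduct

/-- The slice map `id_A ⊗ θ : A ⊗[k] H → A` induced by a functional `θ : H → k`,
using the canonical identification `A ⊗[k] k ≅ A`. -/
noncomputable def sliceFunctional (k : Type*) [CommRing k]
    (A : Type*) [AddCommGroup A] [Module k A]
    {H : Type*} [AddCommGroup H] [Module k H] (θ : H →ₗ[k] k) :
    A ⊗[k] H →ₗ[k] A :=
  (TensorProduct.rid k A).toLinearMap ∘ₗ TensorProduct.map LinearMap.id θ

section Aux
variable {k : Type*} [CommRing k] {H : Type*} [Ring H] [Algebra k H]
  {A : Type*} [Ring A] [Algebra k A] (θ : H →ₗ[k] k)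

lemma sliceFunctional_tmul (a : A) (h : H) :
    sliceFunctional k A θ (a ⊗ₜ[k] h) = θ h • a := by
  simp [sliceFunctional]

lemma slice_sandwich (a b : A) (Z : A ⊗[k] H) :
    sliceFunctional k A θ
        ((Algebra.TensorProduct.includeLeft : A →ₐ[k] A ⊗[k] H) a * Z *
          (Algebra.TensorProduct.includeLeft : A →ₐ[k] A ⊗[k] H) b) =
      a * sliceFunctional k A θ Z * b := by
  induction Z using TensorProduct.induction_on with
  | zero => simp
  | tmul x h =>
      simp [Algebra.TensorProduct.tmul_mul_tmul, sliceFunctional,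
        mul_smul_comm, smul_mul_assoc]
  | add z1 z2 h1 h2 =>
      simp only [mul_add, add_mul, map_add, h1, h2]

lemma slice3_sandwich (Y W : A ⊗[k] H) (Z : A ⊗[k] (H ⊗[k] H)) :
    TensorProduct.map LinearMap.id (sliceFunctional k H θ)
        (Algebra.TensorProduct.map (AlgHom.id k A)
            (Algebra.TensorProduct.includeLeft : H →ₐ[k] H ⊗[k] H) Y * Z *
          Algebra.TensorProduct.map (AlgHom.id k A)
            (Algebra.TensorProduct.includeLeft : H →ₐ[k] H ⊗[k] H) W) =
      Y * TensorProduct.map LinearMap.id (sliceFunctional k H θ) Z * W := by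
  induction Z using TensorProduct.induction_on with
  | zero => simp
  | add z1 z2 h1 h2 => simp only [mul_add, add_mul, map_add, h1, h2]
  | tmul x p =>
      induction p using TensorProduct.induction_on with
      | zero => simp
      | add p1 p2 h1 h2 =>
          simp only [tmul_add, mul_add, add_mul, map_add, h1, h2]
      | tmul h1 h2 =>
          induction Y using TensorProduct.induction_on with
          | zero => simp
          | add y1 y2 hy1 hy2 =>
              simp only [map_add, add_mul, mul_add, hy1, hy2]
          | tmul a g =>
              induction W using TensorProduct.induction_on with
              | zero => simp
              | add w1 w2 hw1 hw2 =>
                  simp only [map_add, add_mul, mul_add, hw1, hw2]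
              | tmul b g' =>
                  simp [Algebra.TensorProduct.tmul_mul_tmul, sliceFunctional,
                    mul_smul_comm, smul_mul_assoc, tmul_smul, smul_tmul']

lemma slice3_e13 (X : A ⊗[k] H) :
    TensorProduct.map LinearMap.id (sliceFunctional k H θ)
        (Algebra.TensorProduct.map (AlgHom.id k A)
            (Algebra.TensorProduct.includeRight : H →ₐ[k] H ⊗[k] H) X) =
      (Algebra.TensorProduct.includeLeft : A →ₐ[k] A ⊗[k] H)
        (sliceFunctional k A θ X) := by
  induction X using TensorProduct.induction_on with
  | zero => simp
  | add x1 x2 h1 h2 => simp only [map_add, h1, h2]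
  | tmul a h =>
      simp [sliceFunctional, tmul_smul, smul_tmul']

end Aux

section Aux2
variable {k : Type*} [CommRing k] {H : Type*} [Ring H] [Bialgebra k H]
  {A : Type*} [Ring A] [Algebra k A] (θ : H →ₗ[k] k)

lemma slice3_comul
    (hθinv : ∀ h : H,
      sliceFunctional k H θ (Coalgebra.comul h) = θ h • (1 : H))
    (X : A ⊗[k] H) :
    TensorProduct.map LinearMap.id (sliceFunctional k H θ)
        (Algebra.TensorProduct.map (AlgHom.id k A) (Bialgebra.comulAlgHom k H) X) =
      (Algebra.TensorProduct.includeLeft : A →ₐ[k] A ⊗[k] H)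
        (sliceFunctional k A θ X) := by
  induction X using TensorProduct.induction_on with
  | zero => simp
  | add x1 x2 h1 h2 => simp only [map_add, h1, h2]
  | tmul a h =>
      rw [Algebra.TensorProduct.map_tmul, TensorProduct.map_tmul]
      rw [show (Bialgebra.comulAlgHom k H) h = Coalgebra.comul h from rfl]
      rw [hθinv h]
      simp [sliceFunctional, tmul_smul, smul_tmul']

end Aux2

/-- Given a bialgebra `H` over a commutative ring `k`, a unital
associative `k`-algebra `A`, an invertible `V ∈ A ⊗ H` with
`(id ⊗ Δ)(V) = V₁₂V₁₃`, and an invariant unital functional `θ : H → k`, the map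
`E(T) = (id ⊗ θ)(V (T ⊗ 1) V⁻¹)` is a unital idempotent projection of `A` onto the
fixed-point subalgebra `A^V = {T | V(T ⊗ 1) = (T ⊗ 1)V}` which is an
`A^V`-bimodule map. -/
theorem conditional_expectation_of_invariant_functional
    (k : Type*) [CommRing k]
    (H : Type*) [Ring H] [Bialgebra k H]
    (A : Type*) [Ring A] [Algebra k A]
    (V Vinv : A ⊗[k] H)
    (hVr : V * Vinv = 1) (hVl : Vinv * V = 1)
    -- the corepresentation identity `(id_A ⊗ Δ)(V) = V₁₂ V₁₃` in `A ⊗ (H ⊗ H)`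
    (hcorep :
      Algebra.TensorProduct.map (AlgHom.id k A) (Bialgebra.comulAlgHom k H) V =
        Algebra.TensorProduct.map (AlgHom.id k A)
            (Algebra.TensorProduct.includeLeft : H →ₐ[k] H ⊗[k] H) V *
          Algebra.TensorProduct.map (AlgHom.id k A)
            (Algebra.TensorProduct.includeRight : H →ₐ[k] H ⊗[k] H) V)
    (θ : H →ₗ[k] k) (hθone : θ 1 = 1)
    -- invariance: `(id_H ⊗ θ)(Δ h) = θ(h) · 1_H`
    (hθinv : ∀ h : H,
      sliceFunctional k H θ (Coalgebra.comul h) = θ h • (1 : H))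
    (E : A → A)
    (hE : ∀ T : A,
      E T = sliceFunctional k A θ
        (V * (Algebra.TensorProduct.includeLeft : A →ₐ[k] A ⊗[k] H) T * Vinv)) :
    -- (i) `E` takes values in the fixed-point subalgebra `A^V`
    (∀ T : A,
      V * (Algebra.TensorProduct.includeLeft : A →ₐ[k] A ⊗[k] H) (E T) =
        (Algebra.TensorProduct.includeLeft : A →ₐ[k] A ⊗[k] H) (E T) * V) ∧
    -- (ii) `E` is the identity on `A^V`
    (∀ T : A,
      V * (Algebra.TensorProduct.includeLeft : A →ₐ[k] A ⊗[k] H) T =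
          (Algebra.TensorProduct.includeLeft : A →ₐ[k] A ⊗[k] H) T * V →
        E T = T) ∧
    -- (iii) `E` is an `A^V`-bimodule map
    (∀ T a b : A,
      V * (Algebra.TensorProduct.includeLeft : A →ₐ[k] A ⊗[k] H) a =
          (Algebra.TensorProduct.includeLeft : A →ₐ[k] A ⊗[k] H) a * V →
        V * (Algebra.TensorProduct.includeLeft : A →ₐ[k] A ⊗[k] H) b =
            (Algebra.TensorProduct.includeLeft : A →ₐ[k] A ⊗[k] H) b * V →
          E (a * T * b) = a * E T * b) ∧
    -- in particular, `E` is unital and idempotent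
    E 1 = 1 ∧ (∀ T : A, E (E T) = E T) := by
  set ι : A →ₐ[k] A ⊗[k] H := Algebra.TensorProduct.includeLeft with hι
  set ψ : A ⊗[k] H →ₐ[k] A ⊗[k] (H ⊗[k] H) :=
    Algebra.TensorProduct.map (AlgHom.id k A) (Bialgebra.comulAlgHom k H) with hψ
  set e12 : A ⊗[k] H →ₐ[k] A ⊗[k] (H ⊗[k] H) :=
    Algebra.TensorProduct.map (AlgHom.id k A)
      (Algebra.TensorProduct.includeLeft : H →ₐ[k] H ⊗[k] H) with he12
  set e13 : A ⊗[k] H →ₐ[k] A ⊗[k] (H ⊗[k] H) :=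
    Algebra.TensorProduct.map (AlgHom.id k A)
      (Algebra.TensorProduct.includeRight : H →ₐ[k] H ⊗[k] H) with he13
  set s3 : A ⊗[k] (H ⊗[k] H) →ₗ[k] A ⊗[k] H :=
    TensorProduct.map LinearMap.id (sliceFunctional k H θ) with hs3
  -- `ψ Vinv` is the inverse of `ψ V`, but so is `e13 Vinv * e12 Vinv`
  have hψVinv : ψ Vinv = e13 Vinv * e12 Vinv := by
    refine left_inv_eq_right_inv (a := ψ V) ?_ ?_
    · rw [← map_mul, hVl, map_one]
    · rw [hcorep]
      calc e12 V * e13 V * (e13 Vinv * e12 Vinv)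
          = e12 V * (e13 V * e13 Vinv) * e12 Vinv := by
            simp only [mul_assoc]
        _ = 1 := by rw [← map_mul, hVr, map_one, mul_one, ← map_mul, hVr, map_one]
  -- `ψ (ι T) = e13 (ι T)`
  have hψι : ∀ T : A, ψ (ι T) = e13 (ι T) := by
    intro T
    show ψ (T ⊗ₜ[k] 1) = e13 (T ⊗ₜ[k] 1)
    rw [hψ, he13, Algebra.TensorProduct.map_tmul, Algebra.TensorProduct.map_tmul,
      map_one, map_one]
  -- the key identity : `ι (E T) = V * ι (E T) * Vinv`
  have hkey : ∀ T : A, ι (E T) = V * ι (E T) * Vinv := by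
    intro T
    have h1 : ψ (V * ι T * Vinv) = e12 V * e13 (V * ι T * Vinv) * e12 Vinv := by
      rw [map_mul, map_mul, hcorep, hψVinv, hψι, map_mul, map_mul]
      simp only [mul_assoc]
    have h2 := congrArg s3 h1
    rw [slice3_comul θ hθinv, slice3_sandwich θ, slice3_e13 θ] at h2
    rw [hE T]
    exact h2
  refine ⟨?_, ?_, ?_, ?_, ?_⟩
  · -- (i)
    intro T
    have h := hkey T
    calc V * ι (E T) = V * ι (E T) * (Vinv * V) := by rw [hVl, mul_one]
      _ = (V * ι (E T) * Vinv) * V := by simp only [mul_assoc]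
      _ = ι (E T) * V := by rw [← h]
  · -- (ii)
    intro T hT
    rw [hE T, hT, mul_assoc, hVr, mul_one]
    show sliceFunctional k A θ (T ⊗ₜ[k] 1) = T
    rw [sliceFunctional_tmul, hθone, one_smul]
  · -- (iii)
    intro T a b ha hb
    have hb' : ι b * Vinv = Vinv * ι b := by
      calc ι b * Vinv = Vinv * V * ι b * Vinv := by rw [hVl, one_mul]
        _ = Vinv * (V * ι b) * Vinv := by simp only [mul_assoc]
        _ = Vinv * (ι b * V) * Vinv := by rw [hb]
        _ = Vinv * ι b * (V * Vinv) := by simp only [mul_assoc]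
        _ = Vinv * ι b := by rw [hVr, mul_one]
    have hstep : V * ι (a * T * b) * Vinv = ι a * (V * ι T * Vinv) * ι b := by
      rw [map_mul, map_mul]
      calc V * (ι a * ι T * ι b) * Vinv
          = (V * ι a) * ι T * (ι b * Vinv) := by simp only [mul_assoc]
        _ = (ι a * V) * ι T * (Vinv * ι b) := by rw [ha, hb']
        _ = ι a * (V * ι T * Vinv) * ι b := by simp only [mul_assoc]
    rw [hE (a * T * b), hstep, slice_sandwich θ, ← hE T]
  · -- unital
    rw [hE 1, map_one, mul_one, hVr]
    show sliceFunctional k A θ ((1:A) ⊗ₜ[k] 1) = 1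
    rw [sliceFunctional_tmul, hθone, one_smul]
  · -- idempotent
    intro T
    have h := hkey T
    rw [hE (E T), ← h]
    show sliceFunctional k A θ ((E T) ⊗ₜ[k] 1) = E T
    rw [sliceFunctional_tmul, hθone, one_smul]
end

section
/- Let k be a commutative ring, H a bialgebra over k, A a unital associative k-algebra, and V an invertible element of A ⊗ H satisfying (id_A ⊗ Δ)(V) = V₁₂V₁₃ in A ⊗ H ⊗ H. Let H' be another unital k-algebra, α : H → H ⊗ H' an algebra homomorphism, and W an invertible element of A ⊗ H' such that (id_A ⊗ α)(V) = V₁₂W₁₃ in A ⊗ H ⊗ H'. Then for every T ∈ A satisfying W(T ⊗ 1_{H'}) = (T ⊗ 1_{H'})W, the element Y := V(T ⊗ 1_H)V⁻¹ of A ⊗ H satisfies (id_A ⊗ α)(Y) = Y₁₂ in A ⊗ H ⊗ H' (i.e. Y is coinvariant for id_A ⊗ α). -/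
open TensorProduct

/-! Writing `F = id ⊗ α`, the hypotheses give `F V = V₁₂ W₁₃`, and `W₁₃` commutes with
`F (T ⊗ 1) = T ⊗ 1 ⊗ 1`. Cancelling `V₁₂` on the left of `V₁₂ W₁₃ · F V⁻¹ = 1` gives
`W₁₃ · F V⁻¹ = V₁₂⁻¹`, so `F Y = V₁₂ W₁₃ (T ⊗ 1 ⊗ 1) F V⁻¹ = V₁₂ (T ⊗ 1 ⊗ 1) V₁₂⁻¹ = Y₁₂`. -/

theorem mul_mul_eq_of_eq_mul_of_commute {M : Type*} [Monoid M] {x y v v' w t : M}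
    (hx : x = v * w) (hxy : x * y = 1) (hv : v' * v = 1) (hwt : Commute w t) :
    x * t * y = v * t * v' := by
  have hwy : w * y = v' := (left_inv_eq_right_inv hv (by rw [← mul_assoc, ← hx, hxy])).symm
  calc x * t * y = v * (w * t) * y := by rw [hx, mul_assoc v]
    _ = v * t * (w * y) := by rw [hwt.eq, ← mul_assoc v, mul_assoc _ w]
    _ = v * t * v' := by rw [hwy]

theorem Algebra.TensorProduct.map_id_includeLeft {R A B C : Type*} [CommSemiring R]
    [Semiring A] [Algebra R A] [Semiring B] [Algebra R B] [Semiring C] [Algebra R C]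
    (f : B →ₐ[R] C) (a : A) :
    map (AlgHom.id R A) f ((includeLeft : A →ₐ[R] A ⊗[R] B) a) =
      (includeLeft : A →ₐ[R] A ⊗[R] C) a :=
  AlgHom.congr_fun (map_comp_includeLeft (AlgHom.id R A) f) a

theorem conjugate_is_coinvariant_general
    (k : Type*) [CommRing k]
    (H : Type*) [Ring H] [Bialgebra k H]
    (A : Type*) [Ring A] [Algebra k A]
    (H' : Type*) [Ring H'] [Algebra k H']
    (V Vinv : A ⊗[k] H)
    (hVr : V * Vinv = 1) (hVl : Vinv * V = 1)
    (α : H →ₐ[k] H ⊗[k] H')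
    (W : A ⊗[k] H')
    -- `(id_A ⊗ α)(V) = V₁₂ W₁₃` in `A ⊗ (H ⊗ H')`
    (hαV :
      Algebra.TensorProduct.map (AlgHom.id k A) α V =
        Algebra.TensorProduct.map (AlgHom.id k A)
            (Algebra.TensorProduct.includeLeft : H →ₐ[k] H ⊗[k] H') V *
          Algebra.TensorProduct.map (AlgHom.id k A)
            (Algebra.TensorProduct.includeRight : H' →ₐ[k] H ⊗[k] H') W)
    (T : A)
    -- `T` commutes with `W`: `W(T ⊗ 1) = (T ⊗ 1)W`
    (hT : W * (Algebra.TensorProduct.includeLeft : A →ₐ[k] A ⊗[k] H') T =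
        (Algebra.TensorProduct.includeLeft : A →ₐ[k] A ⊗[k] H') T * W) :
    -- conclusion: `Y := V(T ⊗ 1)V⁻¹` satisfies `(id_A ⊗ α)(Y) = Y₁₂`
    Algebra.TensorProduct.map (AlgHom.id k A) α
        (V * (Algebra.TensorProduct.includeLeft : A →ₐ[k] A ⊗[k] H) T * Vinv) =
      Algebra.TensorProduct.map (AlgHom.id k A)
        (Algebra.TensorProduct.includeLeft : H →ₐ[k] H ⊗[k] H')
        (V * (Algebra.TensorProduct.includeLeft : A →ₐ[k] A ⊗[k] H) T * Vinv) := by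
  open Algebra.TensorProduct in
  have hWT : Commute (map (AlgHom.id k A) (includeRight : H' →ₐ[k] H ⊗[k] H') W)
      ((includeLeft : A →ₐ[k] A ⊗[k] (H ⊗[k] H')) T) := by
    simpa only [map_id_includeLeft] using Commute.map (hT : Commute _ _)
      (map (AlgHom.id k A) (includeRight : H' →ₐ[k] H ⊗[k] H'))
  simp only [map_mul, Algebra.TensorProduct.map_id_includeLeft]
  exact mul_mul_eq_of_eq_mul_of_commute hαV (by rw [← map_mul, hVr, map_one])
    (by rw [← map_mul, hVl, map_one]) hWT

/-- Let `H` be a bialgebra over a commutative ring `k`, `A` a unital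
associative `k`-algebra, and `V` an invertible element of `A ⊗ H` satisfying the
corepresentation identity `(id_A ⊗ Δ)(V) = V₁₂V₁₃`.  Let `H'` be another unital
`k`-algebra, `α : H → H ⊗ H'` an algebra homomorphism and `W` an invertible element
of `A ⊗ H'` such that `(id_A ⊗ α)(V) = V₁₂W₁₃` in `A ⊗ H ⊗ H'`.  Then for every
`T ∈ A` commuting with `W` (in the sense `W(T ⊗ 1) = (T ⊗ 1)W`), the element
`Y = V(T ⊗ 1)V⁻¹` is coinvariant: `(id_A ⊗ α)(Y) = Y₁₂`. -/
theorem conjugate_is_coinvariant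
    (k : Type*) [CommRing k]
    (H : Type*) [Ring H] [Bialgebra k H]
    (A : Type*) [Ring A] [Algebra k A]
    (H' : Type*) [Ring H'] [Algebra k H']
    (V Vinv : A ⊗[k] H)
    (hVr : V * Vinv = 1) (hVl : Vinv * V = 1)
    -- the corepresentation identity `(id_A ⊗ Δ)(V) = V₁₂ V₁₃` in `A ⊗ (H ⊗ H)`
    (hcorep :
      Algebra.TensorProduct.map (AlgHom.id k A) (Bialgebra.comulAlgHom k H) V =
        Algebra.TensorProduct.map (AlgHom.id k A)
            (Algebra.TensorProduct.includeLeft : H →ₐ[k] H ⊗[k] H) V *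
          Algebra.TensorProduct.map (AlgHom.id k A)
            (Algebra.TensorProduct.includeRight : H →ₐ[k] H ⊗[k] H) V)
    (α : H →ₐ[k] H ⊗[k] H')
    (W Winv : A ⊗[k] H')
    (hWr : W * Winv = 1) (hWl : Winv * W = 1)
    -- `(id_A ⊗ α)(V) = V₁₂ W₁₃` in `A ⊗ (H ⊗ H')`
    (hαV :
      Algebra.TensorProduct.map (AlgHom.id k A) α V =
        Algebra.TensorProduct.map (AlgHom.id k A)
            (Algebra.TensorProduct.includeLeft : H →ₐ[k] H ⊗[k] H') V *
          Algebra.TensorProduct.map (AlgHom.id k A)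
            (Algebra.TensorProduct.includeRight : H' →ₐ[k] H ⊗[k] H') W)
    (T : A)
    -- `T` commutes with `W`: `W(T ⊗ 1) = (T ⊗ 1)W`
    (hT : W * (Algebra.TensorProduct.includeLeft : A →ₐ[k] A ⊗[k] H') T =
        (Algebra.TensorProduct.includeLeft : A →ₐ[k] A ⊗[k] H') T * W) :
    -- conclusion: `Y := V(T ⊗ 1)V⁻¹` satisfies `(id_A ⊗ α)(Y) = Y₁₂`
    Algebra.TensorProduct.map (AlgHom.id k A) α
        (V * (Algebra.TensorProduct.includeLeft : A →ₐ[k] A ⊗[k] H) T * Vinv) =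
      Algebra.TensorProduct.map (AlgHom.id k A)
        (Algebra.TensorProduct.includeLeft : H →ₐ[k] H ⊗[k] H')
        (V * (Algebra.TensorProduct.includeLeft : A →ₐ[k] A ⊗[k] H) T * Vinv) :=
  conjugate_is_coinvariant_general k H A H' V Vinv hVr hVl α W hαV T hT
end

section
/- Let k be a commutative ring and P, Q, R unital associative k-algebras. Let U ∈ P ⊗ R, X ∈ P ⊗ Q, and Y ∈ Q ⊗ R all be invertible. Write τ for the canonical flip algebra isomorphisms interchanging the two tensor factors, and set Û := τ(U⁻¹) ∈ R ⊗ P, X̂ := τ(Y⁻¹) ∈ R ⊗ Q, Ŷ := τ(X⁻¹) ∈ Q ⊗ P. Then the equation U₁₃Y₂₃ = X₁₂⁻¹ Y₂₃ X₁₂ holds in P ⊗ Q ⊗ R if and only if the equation Û₁₃Ŷ₂₃ = X̂₁₂⁻¹ Ŷ₂₃ X̂₁₂ holds in R ⊗ Q ⊗ P. -/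
/-!
Both equations say that three invertible elements `a = U₁₃`, `b = Y₂₃`, `c = X₁₂` satisfy
`a b = c⁻¹ b c`; in any group this is equivalent to `a⁻¹ c⁻¹ = b c⁻¹ b⁻¹`, as both amount to
`a = c⁻¹ b c b⁻¹`. Applying the algebra isomorphism `p ⊗ (q ⊗ r) ↦ r ⊗ (q ⊗ p)`, which exchanges
the legs `12` and `23` and fixes the leg `13` up to the flip of factors, turns the latter
equation into the dual one.
-/

open TensorProduct

theorem mul_eq_inv_mul_mul_iff_inv_mul_inv_eq {G : Type*} [Group G] {a b c : G} :
    a * b = c⁻¹ * b * c ↔ a⁻¹ * c⁻¹ = b * c⁻¹ * b⁻¹ := by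
  rw [← eq_mul_inv_iff_mul_eq, ← eq_mul_inv_iff_mul_eq, inv_eq_iff_eq_inv]
  simp only [mul_inv_rev, inv_inv, mul_assoc]

theorem mul_eq_mul_mul_iff_of_mul_eq_one {M : Type*} [Monoid M] {a a' b b' c c' : M}
    (ha : a * a' = 1) (ha' : a' * a = 1) (hb : b * b' = 1) (hb' : b' * b = 1)
    (hc : c * c' = 1) (hc' : c' * c = 1) :
    a * b = c' * b * c ↔ a' * c' = b * c' * b' := by
  simpa only [Units.ext_iff, Units.val_mul, Units.inv_mk, Units.val_mk] using
    mul_eq_inv_mul_mul_iff_inv_mul_inv_eq (a := (⟨a, a', ha, ha'⟩ : Mˣ))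
      (b := ⟨b, b', hb, hb'⟩) (c := ⟨c, c', hc, hc'⟩)

namespace TensorProduct.Leg

open Algebra.TensorProduct (includeLeft includeRight comm)

variable (k : Type*) [CommRing k]
  (A : Type*) [Ring A] [Algebra k A]
  (B : Type*) [Ring B] [Algebra k B]
  (C : Type*) [Ring C] [Algebra k C]

abbrev leg12 : A ⊗[k] B →ₐ[k] A ⊗[k] (B ⊗[k] C) :=
  Algebra.TensorProduct.map (AlgHom.id k A) includeLeft

abbrev leg13 : A ⊗[k] C →ₐ[k] A ⊗[k] (B ⊗[k] C) :=
  Algebra.TensorProduct.map (AlgHom.id k A) includeRight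

abbrev leg23 : B ⊗[k] C →ₐ[k] A ⊗[k] (B ⊗[k] C) := includeRight

noncomputable def flip13 : A ⊗[k] (B ⊗[k] C) ≃ₐ[k] C ⊗[k] (B ⊗[k] A) :=
  (Algebra.TensorProduct.congr AlgEquiv.refl (comm k B C)).trans
    ((comm k A (C ⊗[k] B)).trans (Algebra.TensorProduct.assoc k k k C B A))

variable {k A B C}

@[simp]
theorem flip13_tmul (a : A) (b : B) (c : C) :
    flip13 k A B C (a ⊗ₜ (b ⊗ₜ c)) = c ⊗ₜ (b ⊗ₜ a) := by
  simp [flip13, Algebra.TensorProduct.congr_apply]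

theorem flip13_leg12 (Z : A ⊗[k] B) :
    flip13 k A B C (leg12 k A B C Z) = leg23 k C B A (comm k A B Z) := by
  induction Z using TensorProduct.induction_on with
  | zero => simp
  | tmul a b => simp [leg12, leg23]
  | add x y hx hy => simp only [map_add, hx, hy]

theorem flip13_leg13 (Z : A ⊗[k] C) :
    flip13 k A B C (leg13 k A B C Z) = leg13 k C B A (comm k A C Z) := by
  induction Z using TensorProduct.induction_on with
  | zero => simp
  | tmul a c => simp [leg13]
  | add x y hx hy => simp only [map_add, hx, hy]

theorem flip13_leg23 (Z : B ⊗[k] C) :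
    flip13 k A B C (leg23 k A B C Z) = leg12 k C B A (comm k B C Z) := by
  induction Z using TensorProduct.induction_on with
  | zero => simp
  | tmul b c => simp [leg12, leg23]
  | add x y hx hy => simp only [map_add, hx, hy]

end TensorProduct.Leg

open TensorProduct.Leg

/-- Let `P`, `Q`, `R` be unital associative algebras over a
commutative ring `k`, and let `U ∈ P ⊗ R`, `X ∈ P ⊗ Q`, `Y ∈ Q ⊗ R` be invertible.
With `Û := τ(U⁻¹)`, `X̂ := τ(Y⁻¹)`, `Ŷ := τ(X⁻¹)` (where `τ` denotes the flip of the
two tensor factors), the equation `U₁₃Y₂₃ = X₁₂⁻¹ Y₂₃ X₁₂` in `P ⊗ Q ⊗ R` holds if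
and only if `Û₁₃Ŷ₂₃ = X̂₁₂⁻¹ Ŷ₂₃ X̂₁₂` holds in `R ⊗ Q ⊗ P`. -/
theorem pentagon_covariance_duality
    (k : Type*) [CommRing k]
    (P : Type*) [Ring P] [Algebra k P]
    (Q : Type*) [Ring Q] [Algebra k Q]
    (R : Type*) [Ring R] [Algebra k R]
    (U Uinv : P ⊗[k] R) (hUr : U * Uinv = 1) (hUl : Uinv * U = 1)
    (X Xinv : P ⊗[k] Q) (hXr : X * Xinv = 1) (hXl : Xinv * X = 1)
    (Y Yinv : Q ⊗[k] R) (hYr : Y * Yinv = 1) (hYl : Yinv * Y = 1) :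
    -- `U₁₃ Y₂₃ = X₁₂⁻¹ Y₂₃ X₁₂` in `P ⊗ (Q ⊗ R)`
    (Algebra.TensorProduct.map (AlgHom.id k P)
          (Algebra.TensorProduct.includeRight : R →ₐ[k] Q ⊗[k] R) U *
        (Algebra.TensorProduct.includeRight : Q ⊗[k] R →ₐ[k] P ⊗[k] (Q ⊗[k] R)) Y =
      Algebra.TensorProduct.map (AlgHom.id k P)
          (Algebra.TensorProduct.includeLeft : Q →ₐ[k] Q ⊗[k] R) Xinv *
        (Algebra.TensorProduct.includeRight : Q ⊗[k] R →ₐ[k] P ⊗[k] (Q ⊗[k] R)) Y *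
        Algebra.TensorProduct.map (AlgHom.id k P)
          (Algebra.TensorProduct.includeLeft : Q →ₐ[k] Q ⊗[k] R) X)
    ↔
    -- `Û₁₃ Ŷ₂₃ = X̂₁₂⁻¹ Ŷ₂₃ X̂₁₂` in `R ⊗ (Q ⊗ P)`, where
    -- `Û = τ(U⁻¹)`, `Ŷ = τ(X⁻¹)`, `X̂ = τ(Y⁻¹)` and hence `X̂⁻¹ = τ(Y)`
    (Algebra.TensorProduct.map (AlgHom.id k R)
          (Algebra.TensorProduct.includeRight : P →ₐ[k] Q ⊗[k] P)
          (Algebra.TensorProduct.comm k P R Uinv) *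
        (Algebra.TensorProduct.includeRight : Q ⊗[k] P →ₐ[k] R ⊗[k] (Q ⊗[k] P))
          (Algebra.TensorProduct.comm k P Q Xinv) =
      Algebra.TensorProduct.map (AlgHom.id k R)
          (Algebra.TensorProduct.includeLeft : Q →ₐ[k] Q ⊗[k] P)
          (Algebra.TensorProduct.comm k Q R Y) *
        (Algebra.TensorProduct.includeRight : Q ⊗[k] P →ₐ[k] R ⊗[k] (Q ⊗[k] P))
          (Algebra.TensorProduct.comm k P Q Xinv) *
        Algebra.TensorProduct.map (AlgHom.id k R)
          (Algebra.TensorProduct.includeLeft : Q →ₐ[k] Q ⊗[k] P)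
          (Algebra.TensorProduct.comm k Q R Yinv)) := by
  refine (mul_eq_mul_mul_iff_of_mul_eq_one
      (map_mul_eq_one (leg13 k P Q R) hUr) (map_mul_eq_one (leg13 k P Q R) hUl)
      (map_mul_eq_one (leg23 k P Q R) hYr) (map_mul_eq_one (leg23 k P Q R) hYl)
      (map_mul_eq_one (leg12 k P Q R) hXr) (map_mul_eq_one (leg12 k P Q R) hXl)).trans ?_
  rw [← (flip13 k P Q R).injective.eq_iff]
  simp only [map_mul, flip13_leg12, flip13_leg13, flip13_leg23]
end
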